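/- Let A be an odd positive definite unimodular integral lattice of rank 24 with no vectors of norm 1, and let h₁ ≤ h₂ be the Coxeter numbers of its two even neighbors. Then h₂ ≤ 2h₁ + 2. -/

import Mathlib

/-!
Write `L = ℤⁿ ⊆ ℚⁿ` for the odd lattice and `L₀` for its even part. An even neighbor `B` satisfies
`L₀ ⊆ B ⊆ ½ L`, and reducing mod 2 shows that `B` meets only one coset of `L` besides `L` itself
(the only nonzero functional on `𝔽₂ⁿ` vanishing on the kernel of `z ↦ zᵀMz` is that map itself).
So any two roots of `B₂` outside `L` differ by a vector of `L`, while the roots inside `L` lie in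
`L₀ ⊆ B₁`. If `u` is a root outside `L`, the reflection in `u` swaps the roots `x` with
`⟨x, u⟩ = ±1` inside and outside `L`, `±u` are two more roots outside `L`, and the remaining roots
lie in `u^⊥`, of smaller rank. By induction there are at most `2 · 24` more roots of `B₂` outside
`L` than inside, so `24 h₂ ≤ 2 · 24 h₁ + 48`.
-/

open Matrix

/-- The `ℚ`-bilinear extension of the integral bilinear form with Gram matrix
`M` to `L ⊗ ℚ = (Fin n → ℚ)`. -/
def qformQ {n : ℕ} (M : Matrix (Fin n) (Fin n) ℤ) (x y : Fin n → ℚ) : ℚ :=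
  x ⬝ᵥ (M.map (fun a => (a : ℚ))).mulVec y

/-- `B` is an even neighbor of the odd unimodular lattice with Gram matrix `M`:
an even unimodular lattice (inside `L ⊗ ℚ`) containing the even sublattice
`L₀ = {x ∈ L : ⟨x,x⟩ even}`. -/
def IsEvenNeighbor {n : ℕ} (M : Matrix (Fin n) (Fin n) ℤ)
    (B : Submodule ℤ (Fin n → ℚ)) : Prop :=
  (∀ z : Fin n → ℤ, (2 : ℤ) ∣ z ⬝ᵥ M.mulVec z → (fun i => (z i : ℚ)) ∈ B) ∧
  (∀ x ∈ B, ∀ y ∈ B, ∃ k : ℤ, qformQ M x y = k) ∧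
  (∀ x ∈ B, ∃ k : ℤ, qformQ M x x = 2 * k) ∧
  (∃ b : Module.Basis (Fin n) ℤ B,
    (Matrix.of fun i j => qformQ M ((b i : Fin n → ℚ)) ((b j : Fin n → ℚ))).det = 1)

namespace LinearMap.BilinForm

open scoped Classical

variable {K V : Type*} [Field K] [AddCommGroup V] [Module K V] (β : LinearMap.BilinForm K V)

/-- With `neg_mem`, `sub_mem` is closure under the reflections `x ↦ x - β x y • y`. -/
structure IsClosedRootSet (S : Finset V) : Prop where
  apply_self : ∀ x ∈ S, β x x = 2
  neg_mem : ∀ x ∈ S, -x ∈ S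
  sub_mem : ∀ x ∈ S, ∀ y ∈ S, β x y = 1 → x - y ∈ S
  apply_cases : ∀ x ∈ S, ∀ y ∈ S, β x y = 0 ∨ β x y = 1 ∨ β x y = -1 ∨ x = y ∨ x = -y

variable {β}

theorem IsClosedRootSet.filter_apply_eq_zero {S : Finset V} (hS : β.IsClosedRootSet S) (u : V) :
    β.IsClosedRootSet (S.filter (β · u = 0)) where
  apply_self x hx := hS.apply_self x (Finset.mem_of_mem_filter x hx)
  neg_mem x hx := by
    obtain ⟨hxS, hx⟩ := Finset.mem_filter.mp hx
    exact Finset.mem_filter.mpr ⟨hS.neg_mem x hxS, by simp [hx]⟩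
  sub_mem x hx y hy hxy := by
    obtain ⟨hxS, hx⟩ := Finset.mem_filter.mp hx
    obtain ⟨hyS, hy⟩ := Finset.mem_filter.mp hy
    exact Finset.mem_filter.mpr ⟨hS.sub_mem x hxS y hyS hxy, by simp [hx, hy]⟩
  apply_cases x hx y hy :=
    hS.apply_cases x (Finset.mem_of_mem_filter x hx) y (Finset.mem_of_mem_filter y hy)

theorem finrank_span_filter_apply_eq_zero_lt {S : Finset V} {u : V} (huS : u ∈ S)
    (hu : β u u ≠ 0) :
    Module.finrank K (Submodule.span K (S.filter (β · u = 0) : Set V)) <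
      Module.finrank K (Submodule.span K (S : Set V)) := by
  have hle : Submodule.span K (S.filter (β · u = 0) : Set V) ≤ LinearMap.ker (β.flip u) := by
    rw [Submodule.span_le]
    intro x hx
    simpa using (Finset.mem_filter.mp hx).2
  refine Submodule.finrank_lt_finrank_of_lt (lt_of_le_of_ne ?_ fun h => ?_)
  · exact Submodule.span_mono (Finset.coe_subset.mpr (Finset.filter_subset _ _))
  · exact hu (hle (h ▸ Submodule.subset_span huS))

variable [CharZero K] (G : AddSubgroup V)

theorem IsClosedRootSet.sum_sign_reflection_eq_zero {S : Finset V} (hS : β.IsClosedRootSet S)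
    {u : V} (huS : u ∈ S) (huG : u ∉ G) (hG : ∀ x ∈ S, ∀ y ∈ S, x ∉ G → y ∉ G → x - y ∈ G) :
    ∑ x ∈ S with β x u = 1 ∨ β x u = -1, (if x ∈ G then -1 else 1 : ℤ) = 0 := by
  have hu := hS.apply_self u huS
  let s : V → V := fun x => x - β x u • u
  have hs_pair (x : V) : β (s x) u = - β x u := by
    simp only [s, map_sub, map_smul, LinearMap.sub_apply, LinearMap.smul_apply, hu, smul_eq_mul]
    ring
  have hs_mem {x : V} (hx : β x u = 1 ∨ β x u = -1) : ∃ y ∈ S, s x = x - y ∧ y ∉ G := by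
    rcases hx with h | h
    · exact ⟨u, huS, by simp [s, h], huG⟩
    · exact ⟨-u, hS.neg_mem u huS, by simp [s, h], fun h' => huG (by simpa using G.neg_mem h')⟩
  refine Finset.sum_involution (fun x _ => s x) ?_ ?_ ?_ ?_
  · intro x hx
    obtain ⟨hxS, hx⟩ := Finset.mem_filter.mp hx
    obtain ⟨y, hyS, hsy, hyG⟩ := hs_mem hx
    rw [hsy]
    by_cases hxG : x ∈ G
    · have : x - y ∉ G := fun h => hyG (by simpa using G.sub_mem hxG h)
      simp [hxG, this]
    · simp [hxG, hG x hxS y hyS hxG hyG]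
  · intro x hx _ hsx
    have : β x u = - β x u := by rw [← hs_pair, hsx]
    rcases (Finset.mem_filter.mp hx).2 with h | h <;> rw [h] at this <;> norm_num at this
  · intro x hx
    obtain ⟨hxS, hx⟩ := Finset.mem_filter.mp hx
    refine Finset.mem_filter.mpr ⟨?_, by rw [hs_pair]; rcases hx with h | h <;> simp [h]⟩
    rcases hx with h | h
    · simpa [s, h] using hS.sub_mem x hxS u huS h
    · have := hS.neg_mem _ (hS.sub_mem (-x) (hS.neg_mem x hxS) u huS (by simp [h]))
      simpa [s, h, add_comm] using this
  · intro x _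
    simp only [s, hs_pair, neg_smul, sub_neg_eq_add, sub_add_cancel]

theorem IsClosedRootSet.sum_sign_le_two_mul_finrank {S : Finset V} (hS : β.IsClosedRootSet S)
    (hG : ∀ x ∈ S, ∀ y ∈ S, x ∉ G → y ∉ G → x - y ∈ G) :
    ∑ x ∈ S, (if x ∈ G then -1 else 1 : ℤ) ≤
      2 * Module.finrank K (Submodule.span K (S : Set V)) := by
  induction S using Finset.strongInduction with | H S ih => ?_
  by_cases hSG : ∀ x ∈ S, x ∈ G
  · calc ∑ x ∈ S, (if x ∈ G then -1 else 1 : ℤ) ≤ 0 :=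
          Finset.sum_nonpos fun x hx => by simp [hSG x hx]
      _ ≤ _ := by positivity
  push Not at hSG
  obtain ⟨u, huS, huG⟩ := hSG
  have hu := hS.apply_self u huS
  have hu_ne : u ≠ -u := fun h => by
    have := congrArg (β · u) h
    norm_num [hu] at this
  have hrest : S.filter (¬ β · u = 0) =
      insert u (insert (-u) (S.filter (fun x => β x u = 1 ∨ β x u = -1))) := by
    ext x
    simp only [Finset.mem_filter, Finset.mem_insert]
    constructor
    · rintro ⟨hxS, hx0⟩
      rcases hS.apply_cases x hxS u huS with h | h | h | h | h
      exacts [absurd h hx0, Or.inr (Or.inr ⟨hxS, Or.inl h⟩), Or.inr (Or.inr ⟨hxS, Or.inr h⟩),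
        Or.inl h, Or.inr (Or.inl h)]
    · rintro (rfl | rfl | ⟨hxS, h⟩)
      · exact ⟨huS, by simp [hu]⟩
      · exact ⟨hS.neg_mem _ huS, by simp [hu]⟩
      · exact ⟨hxS, by rcases h with h | h <;> simp [h]⟩
  have hsum_rest : ∑ x ∈ S.filter (¬ β · u = 0), (if x ∈ G then -1 else 1 : ℤ) = 2 := by
    have hnegG : -u ∉ G := fun h => huG (by simpa using G.neg_mem h)
    rw [hrest, Finset.sum_insert (by norm_num [hu_ne, hu]), Finset.sum_insert (by norm_num [hu]),
      hS.sum_sign_reflection_eq_zero G huS huG hG]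
    simp [huG, hnegG]
  have ih₀ := ih _ (Finset.filter_ssubset.mpr ⟨u, huS, by simp [hu]⟩)
    (hS.filter_apply_eq_zero u)
    (fun x hx y hy => hG x (Finset.mem_of_mem_filter x hx) y (Finset.mem_of_mem_filter y hy))
  have hrank := finrank_span_filter_apply_eq_zero_lt (β := β) huS (by simp [hu])
  rw [← Finset.sum_filter_add_sum_filter_not S (β · u = 0), hsum_rest]
  omega

theorem IsClosedRootSet.card_filter_notMem_le {S : Finset V} (hS : β.IsClosedRootSet S)
    (hG : ∀ x ∈ S, ∀ y ∈ S, x ∉ G → y ∉ G → x - y ∈ G) :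
    (S.filter (· ∉ G)).card ≤
      (S.filter (· ∈ G)).card + 2 * Module.finrank K (Submodule.span K (S : Set V)) := by
  have h := hS.sum_sign_le_two_mul_finrank G hG
  rw [Finset.sum_ite] at h
  simp only [Finset.sum_const, smul_neg, nsmul_eq_mul, mul_one] at h
  omega

end LinearMap.BilinForm

theorem LinearMap.BilinForm.IsSymm.apply_cases_of_apply_self_eq_two
    {K V : Type*} [Field K] [LinearOrder K] [IsStrictOrderedRing K] [AddCommGroup V] [Module K V]
    {β : LinearMap.BilinForm K V} (hβ : β.IsSymm) (hpos : ∀ v, v ≠ 0 → 0 < β v v) {x y : V}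
    (hx : β x x = 2) (hy : β y y = 2) {k : ℤ} (hk : β x y = k) :
    β x y = 0 ∨ β x y = 1 ∨ β x y = -1 ∨ x = y ∨ x = -y := by
  have hnonneg (v : V) : 0 ≤ β v v := by
    rcases eq_or_ne v 0 with rfl | hv
    · simp
    · exact (hpos v hv).le
  have hsub : β (x - y) (x - y) = 4 - 2 * k := by
    simp only [map_sub, LinearMap.sub_apply, hx, hy, hk, hβ.eq y x]; ring
  have hadd : β (x + y) (x + y) = 4 + 2 * k := by
    simp only [map_add, LinearMap.add_apply, hx, hy, hk, hβ.eq y x]; ring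
  have hk_le : k ≤ 2 := by
    have := hnonneg (x - y); rw [hsub] at this; exact_mod_cast (by linarith : (k : K) ≤ 2)
  have hk_ge : -2 ≤ k := by
    have := hnonneg (x + y); rw [hadd] at this; exact_mod_cast (by linarith : (-2 : K) ≤ k)
  rw [hk]
  interval_cases k
  · refine Or.inr (Or.inr (Or.inr (Or.inr (eq_neg_of_add_eq_zero_left ?_))))
    by_contra h; have := hpos _ h; rw [hadd] at this; norm_num at this
  · simp
  · simp
  · simp
  · refine Or.inr (Or.inr (Or.inr (Or.inl (sub_eq_zero.mp ?_))))
    by_contra h; have := hpos _ h; rw [hsub] at this; norm_num at this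

theorem Module.Dual.eq_of_ker_le_of_ne_zero_zmod_two {V : Type*} [AddCommGroup V]
    [Module (ZMod 2) V] {q f : Module.Dual (ZMod 2) V} (hf : LinearMap.ker q ≤ LinearMap.ker f)
    (hf0 : f ≠ 0) : f = q := by
  have : f ∈ Submodule.span (ZMod 2) (Set.range fun _ : Unit => q) :=
    mem_span_of_iInf_ker_le_ker (by simpa using hf)
  rw [Set.range_const, Submodule.mem_span_singleton] at this
  obtain ⟨c, rfl⟩ := this
  have hc : ∀ c : ZMod 2, c = 0 ∨ c = 1 := by decide
  rcases hc c with rfl | rfl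
  · exact absurd (zero_smul _ q) hf0
  · exact one_smul _ q

theorem Matrix.IsSymm.add_dotProduct_mulVec_add_of_charTwo {ι R : Type*} [Fintype ι] [CommRing R]
    [CharP R 2] {A : Matrix ι ι R} (hA : A.IsSymm) (a b : ι → R) :
    (a + b) ⬝ᵥ A *ᵥ (a + b) = a ⬝ᵥ A *ᵥ a + b ⬝ᵥ A *ᵥ b := by
  have hba : b ⬝ᵥ A *ᵥ a = a ⬝ᵥ A *ᵥ b := by
    rw [dotProduct_mulVec, ← mulVec_transpose, hA, dotProduct_comm]
  rw [add_dotProduct, mulVec_add, dotProduct_add, dotProduct_add, hba,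
    add_assoc, ← add_assoc (a ⬝ᵥ A *ᵥ b), CharTwo.add_self_eq_zero, zero_add]

section IntLattice

variable {n : ℕ}

def intLattice (n : ℕ) : AddSubgroup (Fin n → ℚ) := ((Int.castAddHom ℚ).compLeft (Fin n)).range

theorem mem_intLattice {x : Fin n → ℚ} :
    x ∈ intLattice n ↔ ∃ z : Fin n → ℤ, (fun i => (z i : ℚ)) = x :=
  Iff.rfl

theorem intCast_mem_intLattice (z : Fin n → ℤ) : (fun i => (z i : ℚ)) ∈ intLattice n :=
  ⟨z, rfl⟩

theorem qformQ_eq_toBilin' (M : Matrix (Fin n) (Fin n) ℤ) (x y : Fin n → ℚ) :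
    qformQ M x y = (M.map (Int.cast : ℤ → ℚ)).toBilin' x y :=
  (Matrix.toBilin'_apply' _ x y).symm

theorem Matrix.intCast_dotProduct_mulVec {R : Type*} [CommRing R] (M : Matrix (Fin n) (Fin n) ℤ)
    (z w : Fin n → ℤ) :
    ((z ⬝ᵥ M *ᵥ w : ℤ) : R) =
      (fun i => (z i : R)) ⬝ᵥ M.map (Int.cast : ℤ → R) *ᵥ fun i => (w i : R) := by
  simp [dotProduct, mulVec, Finset.mul_sum]

theorem qformQ_intCast (M : Matrix (Fin n) (Fin n) ℤ) (z w : Fin n → ℤ) :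
    qformQ M (fun i => (z i : ℚ)) (fun i => (w i : ℚ)) = ((z ⬝ᵥ M *ᵥ w : ℤ) : ℚ) :=
  (M.intCast_dotProduct_mulVec z w).symm

theorem Matrix.intCast_mulVec_mem_intLattice (A : Matrix (Fin n) (Fin n) ℤ) {x : Fin n → ℚ}
    (hx : x ∈ intLattice n) : A.map (Int.cast : ℤ → ℚ) *ᵥ x ∈ intLattice n := by
  obtain ⟨z, rfl⟩ := mem_intLattice.mp hx
  exact ⟨A *ᵥ z, funext fun i => by simp [mulVec, dotProduct]⟩

theorem Matrix.mem_intLattice_of_mulVec_mem {A : Matrix (Fin n) (Fin n) ℤ} (hA : IsUnit A.det)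
    {x : Fin n → ℚ} (hx : A.map (Int.cast : ℤ → ℚ) *ᵥ x ∈ intLattice n) : x ∈ intLattice n := by
  have hinv : A⁻¹.map (Int.cast : ℤ → ℚ) * A.map Int.cast = 1 := by
    rw [show (Int.cast : ℤ → ℚ) = Int.castRingHom ℚ from rfl, ← Matrix.map_mul,
      Matrix.nonsing_inv_mul A hA]
    simp
  simpa [mulVec_mulVec, hinv] using A⁻¹.intCast_mulVec_mem_intLattice hx

theorem qformQ_self_pos {M : Matrix (Fin n) (Fin n) ℤ}
    (hpos : ∀ z : Fin n → ℤ, z ≠ 0 → 0 < z ⬝ᵥ M *ᵥ z) {x : Fin n → ℚ} (hx : x ≠ 0) :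
    0 < qformQ M x x := by
  obtain ⟨⟨b, hb⟩, hbx⟩ := IsLocalization.exist_integer_multiples_of_finite (nonZeroDivisors ℤ) x
  choose z hz using hbx
  have hb0 : (b : ℚ) ≠ 0 := by exact_mod_cast nonZeroDivisors.ne_zero hb
  have hbz : (b : ℚ) • x = fun i => (z i : ℚ) := by
    funext i; simpa [zsmul_eq_mul] using (hz i).symm
  have hz0 : z ≠ 0 := by
    rintro rfl
    refine hx ((smul_eq_zero.mp ?_).resolve_left hb0)
    rw [hbz]
    ext
    simp
  have h := qformQ_intCast M z z
  rw [← hbz, qformQ_eq_toBilin'] at h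
  simp only [map_smul, LinearMap.smul_apply, smul_eq_mul, ← qformQ_eq_toBilin'] at h
  have hbb : (0 : ℚ) < b * b * qformQ M x x := by
    rw [mul_assoc, h]
    exact_mod_cast hpos z hz0
  exact pos_of_mul_pos_right hbb (mul_self_nonneg _)

theorem Matrix.finite_setOf_dotProduct_mulVec_le {M : Matrix (Fin n) (Fin n) ℤ} (hsymm : M.IsSymm)
    (hpos : ∀ z : Fin n → ℤ, z ≠ 0 → 0 < z ⬝ᵥ M *ᵥ z) (hdet : IsUnit M.det) (N : ℤ) :
    {z : Fin n → ℤ | z ⬝ᵥ M *ᵥ z ≤ N}.Finite := by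
  let u : Fin n → Fin n → ℤ := fun j => M⁻¹ *ᵥ Pi.single j 1
  let c : Fin n → ℤ := fun j => N * (u j ⬝ᵥ M *ᵥ u j)
  refine (Set.finite_Icc (-c) c).subset fun z (hz : z ⬝ᵥ M *ᵥ z ≤ N) => ?_
  have hnonneg (v : Fin n → ℤ) : 0 ≤ M.toBilin' v v := by
    rcases eq_or_ne v 0 with rfl | hv
    · simp
    · simpa [Matrix.toBilin'_apply'] using (hpos v hv).le
  have hsq (j : Fin n) : z j * z j ≤ c j := by
    have hzu : M.toBilin' z (u j) = z j := by
      rw [Matrix.toBilin'_apply', mulVec_mulVec, Matrix.mul_nonsing_inv M hdet, one_mulVec,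
        dotProduct_single, mul_one]
    have hcs := LinearMap.BilinForm.apply_mul_apply_le_of_forall_zero_le _ hnonneg z (u j)
    rw [(Matrix.isSymm_toBilin'_iff_isSymm.mpr hsymm).eq (u j) z, hzu] at hcs
    have := hnonneg (u j)
    simp only [Matrix.toBilin'_apply'] at hcs this
    exact hcs.trans (mul_le_mul_of_nonneg_right hz this)
  have habs (j : Fin n) : |z j| ≤ c j := by
    rw [← Int.natCast_natAbs]
    nlinarith [Int.natAbs_le_self_sq (z j), hsq j]
  exact ⟨fun j => (abs_le.mp (habs j)).1, fun j => (abs_le.mp (habs j)).2⟩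

theorem half_intCast_mem_intLattice_iff (v : Fin n → ℤ) :
    (2⁻¹ : ℚ) • (fun i => (v i : ℚ)) ∈ intLattice n ↔ (fun i => (v i : ZMod 2)) = 0 := by
  simp only [mem_intLattice, funext_iff, Pi.zero_apply, ZMod.intCast_zmod_eq_zero_iff_dvd,
    Pi.smul_apply, smul_eq_mul]
  constructor
  · rintro ⟨z, hz⟩ i
    refine ⟨z i, ?_⟩
    have := hz i
    exact_mod_cast (by linarith : (v i : ℚ) = 2 * z i)
  · intro h
    choose z hz using h
    exact ⟨z, fun i => by simp [hz i]⟩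

theorem Matrix.half_intCast_mem_intLattice_iff_mulVec {M : Matrix (Fin n) (Fin n) ℤ}
    (hdet : IsUnit M.det) (w : Fin n → ℤ) :
    (2⁻¹ : ℚ) • (fun i => (w i : ℚ)) ∈ intLattice n ↔
      M.map (Int.cast : ℤ → ZMod 2) *ᵥ (fun i => (w i : ZMod 2)) = 0 := by
  have hℚ : M.map (Int.cast : ℤ → ℚ) *ᵥ ((2⁻¹ : ℚ) • fun i => (w i : ℚ)) =
      (2⁻¹ : ℚ) • fun i => ((M *ᵥ w) i : ℚ) := by
    rw [mulVec_smul]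
    congr 1
    funext i
    simp [mulVec, dotProduct]
  have h₂ : M.map (Int.cast : ℤ → ZMod 2) *ᵥ (fun i => (w i : ZMod 2)) =
      fun i => ((M *ᵥ w) i : ZMod 2) := by
    funext i
    simp [mulVec, dotProduct]
  rw [h₂, ← half_intCast_mem_intLattice_iff, ← hℚ]
  exact ⟨M.intCast_mulVec_mem_intLattice, M.mem_intLattice_of_mulVec_mem hdet⟩

def rootSet (M : Matrix (Fin n) (Fin n) ℤ) (B : Submodule ℤ (Fin n → ℚ)) : Set (Fin n → ℚ) :=
  {x | x ∈ B ∧ qformQ M x x = 2}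

namespace IsEvenNeighbor

variable {M : Matrix (Fin n) (Fin n) ℤ} {B : Submodule ℤ (Fin n → ℚ)}

theorem mem_of_mem_intLattice (hB : IsEvenNeighbor M B) {x : Fin n → ℚ} (hxL : x ∈ intLattice n)
    {k : ℤ} (hx : qformQ M x x = 2 * k) : x ∈ B := by
  obtain ⟨z, rfl⟩ := mem_intLattice.mp hxL
  rw [qformQ_intCast] at hx
  exact hB.1 z ⟨k, by exact_mod_cast hx⟩

theorem two_smul_mem_intLattice (hdet : IsUnit M.det) (hB : IsEvenNeighbor M B) {x : Fin n → ℚ}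
    (hx : x ∈ B) : (2 : ℚ) • x ∈ intLattice n := by
  apply M.mem_intLattice_of_mulVec_mem hdet
  have h2e (j : Fin n) : (fun i => ((Pi.single j 2 : Fin n → ℤ) i : ℚ)) ∈ B :=
    hB.1 _ ⟨2 * M j j, by norm_num [mulVec_single, mul_comm, mul_left_comm]⟩
  choose k hk using fun j => hB.2.1 _ (h2e j) x hx
  refine mem_intLattice.mpr ⟨k, funext fun j => ?_⟩
  rw [← hk j]
  simp [qformQ, mulVec_smul, dotProduct, Pi.single_apply, ite_mul]

theorem dotProduct_mulVec_eq_zero_of_norm_eq_zero (hB : IsEvenNeighbor M B) {x : Fin n → ℚ}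
    (hx : x ∈ B) {w : Fin n → ℤ} (hw : (fun i => (w i : ℚ)) = (2 : ℚ) • x)
    (z : Fin n → ZMod 2) (hz : z ⬝ᵥ M.map (Int.cast : ℤ → ZMod 2) *ᵥ z = 0) :
    z ⬝ᵥ M.map (Int.cast : ℤ → ZMod 2) *ᵥ (fun i => (w i : ZMod 2)) = 0 := by
  set y : Fin n → ℤ := fun i => ((z i).val : ℤ)
  have hyz : (fun i => (y i : ZMod 2)) = z := funext fun i => by simp [y]
  have hy : (2 : ℤ) ∣ y ⬝ᵥ M *ᵥ y := by
    rw [← Nat.cast_ofNat, ← ZMod.intCast_zmod_eq_zero_iff_dvd, M.intCast_dotProduct_mulVec, hyz]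
    exact hz
  obtain ⟨k, hk⟩ := hB.2.1 _ (hB.1 y hy) x hx
  have hyw : y ⬝ᵥ M *ᵥ w = 2 * k := by
    have := qformQ_intCast M y w
    rw [hw, qformQ_eq_toBilin', map_smul, smul_eq_mul, ← qformQ_eq_toBilin', hk] at this
    exact_mod_cast this.symm
  rw [← hyz, ← M.intCast_dotProduct_mulVec, hyw, ZMod.intCast_zmod_eq_zero_iff_dvd]
  exact ⟨k, rfl⟩

theorem sub_mem_intLattice (hsymm : M.IsSymm) (hdet : IsUnit M.det) (hB : IsEvenNeighbor M B)
    {x y : Fin n → ℚ} (hx : x ∈ B) (hy : y ∈ B) (hxL : x ∉ intLattice n)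
    (hyL : y ∉ intLattice n) : x - y ∈ intLattice n := by
  set M₂ := M.map (Int.cast : ℤ → ZMod 2)
  let q : Module.Dual (ZMod 2) (Fin n → ZMod 2) :=
    (AddMonoidHom.mk' (fun z => z ⬝ᵥ M₂ *ᵥ z)
      (hsymm.map _).add_dotProduct_mulVec_add_of_charTwo).toZModLinearMap 2
  have parity {x : Fin n → ℚ} (hx : x ∈ B) (hxL : x ∉ intLattice n) {w : Fin n → ℤ}
      (hw : (fun i => (w i : ℚ)) = (2 : ℚ) • x) :
      dotProductEquiv (ZMod 2) (Fin n) (M₂ *ᵥ fun i => (w i : ZMod 2)) = q := by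
    refine Module.Dual.eq_of_ker_le_of_ne_zero_zmod_two (fun z hz => ?_) fun h => hxL ?_
    · simpa [q, dotProduct_comm] using hB.dotProduct_mulVec_eq_zero_of_norm_eq_zero hx hw z hz
    · have : x = (2⁻¹ : ℚ) • fun i => (w i : ℚ) := by rw [hw, smul_smul]; norm_num
      rw [this, M.half_intCast_mem_intLattice_iff_mulVec hdet]
      simpa using h
  obtain ⟨w, hw⟩ := mem_intLattice.mp (hB.two_smul_mem_intLattice hdet hx)
  obtain ⟨w', hw'⟩ := mem_intLattice.mp (hB.two_smul_mem_intLattice hdet hy)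
  have hww' := (dotProductEquiv (ZMod 2) (Fin n)).injective
    ((parity hx hxL hw).trans (parity hy hyL hw').symm)
  have hxy : x - y = (2⁻¹ : ℚ) • fun i => ((w - w') i : ℚ) := by
    have : (fun i => ((w - w') i : ℚ)) = (2 : ℚ) • (x - y) := by
      rw [smul_sub, ← hw, ← hw']
      funext i
      simp
    rw [this, smul_smul]
    norm_num
  have hw₂ : (fun i => ((w - w') i : ZMod 2)) =
      (fun i => (w i : ZMod 2)) - fun i => (w' i : ZMod 2) := funext fun i => by simp
  rw [hxy, M.half_intCast_mem_intLattice_iff_mulVec hdet, hw₂, mulVec_sub, hww', sub_self]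

theorem finite_rootSet (hsymm : M.IsSymm) (hpos : ∀ z : Fin n → ℤ, z ≠ 0 → 0 < z ⬝ᵥ M *ᵥ z)
    (hdet : IsUnit M.det) (hB : IsEvenNeighbor M B) : (rootSet M B).Finite := by
  refine ((M.finite_setOf_dotProduct_mulVec_le hsymm hpos hdet 8).image
    fun w => (2⁻¹ : ℚ) • fun i => (w i : ℚ)).subset ?_
  rintro x ⟨hxB, hx⟩
  obtain ⟨w, hw⟩ := mem_intLattice.mp (hB.two_smul_mem_intLattice hdet hxB)
  refine ⟨w, ?_, show (2⁻¹ : ℚ) • _ = x by rw [hw, smul_smul]; norm_num⟩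
  have h := qformQ_intCast M w w
  rw [hw, qformQ_eq_toBilin'] at h
  simp only [map_smul, LinearMap.smul_apply, smul_eq_mul, ← qformQ_eq_toBilin', hx] at h
  exact le_of_eq (by exact_mod_cast (by linarith : ((w ⬝ᵥ M *ᵥ w : ℤ) : ℚ) = 8))

theorem isClosedRootSet (hsymm : M.IsSymm) (hpos : ∀ z : Fin n → ℤ, z ≠ 0 → 0 < z ⬝ᵥ M *ᵥ z)
    (hB : IsEvenNeighbor M B) {S : Finset (Fin n → ℚ)} (hS : ∀ x, x ∈ S ↔ x ∈ rootSet M B) :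
    (M.map (Int.cast : ℤ → ℚ)).toBilin'.IsClosedRootSet S := by
  set β := (M.map (Int.cast : ℤ → ℚ)).toBilin'
  have hβ : β.IsSymm := Matrix.isSymm_toBilin'_iff_isSymm.mpr (hsymm.map _)
  have hS' (x : Fin n → ℚ) : x ∈ S ↔ x ∈ B ∧ β x x = 2 := by
    rw [hS]
    exact and_congr_right' (by rw [qformQ_eq_toBilin'])
  refine ⟨fun x hx => ((hS' x).mp hx).2, fun x hx => ?_, fun x hx y hy hxy => ?_,
    fun x hx y hy => ?_⟩
  · obtain ⟨hxB, hx⟩ := (hS' x).mp hx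
    exact (hS' _).mpr ⟨B.neg_mem hxB, by simpa using hx⟩
  · obtain ⟨hxB, hx⟩ := (hS' x).mp hx
    obtain ⟨hyB, hy⟩ := (hS' y).mp hy
    refine (hS' _).mpr ⟨B.sub_mem hxB hyB, ?_⟩
    simp only [map_sub, LinearMap.sub_apply, hx, hy, hxy, hβ.eq y x]
    norm_num
  · obtain ⟨hxB, hx⟩ := (hS' x).mp hx
    obtain ⟨hyB, hy⟩ := (hS' y).mp hy
    obtain ⟨k, hk⟩ := hB.2.1 x hxB y hyB
    refine hβ.apply_cases_of_apply_self_eq_two (fun v hv => ?_) hx hy (k := k) ?_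
    · rw [← qformQ_eq_toBilin']
      exact qformQ_self_pos hpos hv
    · rw [← qformQ_eq_toBilin', hk]

open scoped Classical in
theorem card_filter_notMem_intLattice_le (hsymm : M.IsSymm)
    (hpos : ∀ z : Fin n → ℤ, z ≠ 0 → 0 < z ⬝ᵥ M *ᵥ z) (hdet : IsUnit M.det)
    (hB : IsEvenNeighbor M B) (S : Finset (Fin n → ℚ)) (hS : ∀ x, x ∈ S ↔ x ∈ rootSet M B) :
    (S.filter (· ∉ intLattice n)).card ≤ (S.filter (· ∈ intLattice n)).card + 2 * n := by
  have hrank : Module.finrank ℚ (Submodule.span ℚ (S : Set (Fin n → ℚ))) ≤ n :=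
    (Submodule.finrank_le _).trans (by simp)
  refine ((hB.isClosedRootSet hsymm hpos hS).card_filter_notMem_le _ fun x hx y hy => ?_).trans
    (by omega)
  exact hB.sub_mem_intLattice hsymm hdet ((hS x).mp hx).1 ((hS y).mp hy).1

end IsEvenNeighbor

end IntLattice

theorem rank24_odd_unimodular_neighbor_coxeter_bound_general
    (M : Matrix (Fin 24) (Fin 24) ℤ)
    (hsymm : M.IsSymm)
    (hpos : ∀ x : Fin 24 → ℤ, x ≠ 0 → 0 < x ⬝ᵥ M.mulVec x)
    (hdet : M.det = 1)
    (B₁ B₂ : Submodule ℤ (Fin 24 → ℚ))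
    (hB₁ : IsEvenNeighbor M B₁) (hB₂ : IsEvenNeighbor M B₂)
    (h₁ h₂ : ℕ)
    (hh₁ : Nat.card {x : Fin 24 → ℚ // x ∈ B₁ ∧ qformQ M x x = 2} = 24 * h₁)
    (hh₂ : Nat.card {x : Fin 24 → ℚ // x ∈ B₂ ∧ qformQ M x x = 2} = 24 * h₂) :
    h₂ ≤ 2 * h₁ + 2 := by
  classical
  have hdet' : IsUnit M.det := hdet ▸ isUnit_one
  have hfin₁ := IsEvenNeighbor.finite_rootSet hsymm hpos hdet' hB₁
  have hfin₂ := IsEvenNeighbor.finite_rootSet hsymm hpos hdet' hB₂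
  have hcard₁ : hfin₁.toFinset.card = 24 * h₁ :=
    (Nat.card_eq_card_finite_toFinset hfin₁).symm.trans hh₁
  have hcard₂ : hfin₂.toFinset.card = 24 * h₂ :=
    (Nat.card_eq_card_finite_toFinset hfin₂).symm.trans hh₂
  have hcount := hB₂.card_filter_notMem_intLattice_le hsymm hpos hdet' hfin₂.toFinset (by simp)
  have hinL : (hfin₂.toFinset.filter (· ∈ intLattice 24)).card ≤ 24 * h₁ := by
    refine hcard₁ ▸ Finset.card_le_card fun x hx => ?_
    simp only [Finset.mem_filter, Set.Finite.mem_toFinset] at hx ⊢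
    exact ⟨hB₁.mem_of_mem_intLattice hx.2 (k := 1) (by rw [hx.1.2]; norm_num), hx.1.2⟩
  have hsplit := Finset.card_filter_add_card_filter_not (s := hfin₂.toFinset) (· ∈ intLattice 24)
  omega

/-- Let `A` be an odd positive definite unimodular integral lattice of rank 24
with no vectors of norm 1, and let `h₁ ≤ h₂` be the Coxeter numbers of its two
even neighbors.  Then `h₂ ≤ 2h₁ + 2`. -/
theorem rank24_odd_unimodular_neighbor_coxeter_bound
    (M : Matrix (Fin 24) (Fin 24) ℤ)
    (hsymm : M.IsSymm)
    (hpos : ∀ x : Fin 24 → ℤ, x ≠ 0 → 0 < x ⬝ᵥ M.mulVec x)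
    (hdet : M.det = 1)
    (hodd : ∃ x : Fin 24 → ℤ, ¬ (2 : ℤ) ∣ x ⬝ᵥ M.mulVec x)
    (hno1 : ∀ x : Fin 24 → ℤ, x ⬝ᵥ M.mulVec x ≠ 1)
    (B₁ B₂ : Submodule ℤ (Fin 24 → ℚ))
    (hB₁ : IsEvenNeighbor M B₁) (hB₂ : IsEvenNeighbor M B₂) (hne : B₁ ≠ B₂)
    (h₁ h₂ : ℕ)
    (hh₁ : Nat.card {x : Fin 24 → ℚ // x ∈ B₁ ∧ qformQ M x x = 2} = 24 * h₁)
    (hh₂ : Nat.card {x : Fin 24 → ℚ // x ∈ B₂ ∧ qformQ M x x = 2} = 24 * h₂)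
    (hle : h₁ ≤ h₂) :
    h₂ ≤ 2 * h₁ + 2 :=
  rank24_odd_unimodular_neighbor_coxeter_bound_general M hsymm hpos hdet B₁ B₂ hB₁ hB₂ h₁ h₂ hh₁ hh₂
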